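/- arXiv:math/9805095 — 3 statements merged into one kernel-verified Lean document; each statement's English description precedes it below -/
import Mathlib

section
/- Let δ and Δ be two anticommuting differentials on a k-vector space A (δ² = Δ² = 0, δΔ + Δδ = 0). Then the condition Im δΔ = Im Δδ = Im δ ∩ Ker Δ together with Im δΔ = Im Δδ = Im Δ ∩ Ker δ is equivalent to the single condition Im δΔ = Im Δδ = (Ker δ ∩ Ker Δ) ∩ (Im δ + Im Δ). -/
/-!
Since `Δδ = -δΔ`, the subspace `B = Im δΔ = Im Δδ` lies in both `P = Im δ ∩ Ker Δ` and
`Q = Im Δ ∩ Ker δ`, so `B = P` and `B = Q` together say exactly `B = P + Q`. And `P + Q` is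
`(Ker δ ∩ Ker Δ) ∩ (Im δ + Im Δ)` by the modular law, because `Im δ ≤ Ker δ` and `Im Δ ≤ Ker Δ`.
-/

theorem eq_and_eq_iff_eq_sup {α : Type*} [SemilatticeSup α] {b p q : α} (hp : b ≤ p)
    (hq : b ≤ q) : b = p ∧ b = q ↔ b = p ⊔ q := by
  constructor
  · rintro ⟨rfl, rfl⟩
    exact sup_idem _ |>.symm
  · intro h
    exact ⟨le_antisymm hp (h ▸ le_sup_left), le_antisymm hq (h ▸ le_sup_right)⟩

theorem inf_inf_sup_eq_sup_of_le {α : Type*} [Lattice α] [IsModularLattice α] {a b x y : α}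
    (ha : a ≤ x) (hb : b ≤ y) : x ⊓ y ⊓ (a ⊔ b) = a ⊓ y ⊔ b ⊓ x := by
  calc x ⊓ y ⊓ (a ⊔ b) = y ⊓ (a ⊔ b ⊓ x) := by
        rw [inf_comm x, inf_assoc, ← sup_inf_assoc_of_le b ha, inf_comm x]
    _ = a ⊓ y ⊔ b ⊓ x := by
        rw [← inf_sup_assoc_of_le a (inf_le_left.trans hb), inf_comm y]

namespace LinearMap

variable {R M : Type*} [Ring R] [AddCommGroup M] [Module R M] {δ Δ : M →ₗ[R] M}

theorem range_comp_eq_of_anticomm (hanti : δ ∘ₗ Δ + Δ ∘ₗ δ = 0) :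
    range (δ ∘ₗ Δ) = range (Δ ∘ₗ δ) := by
  rw [eq_neg_of_add_eq_zero_right hanti, range_neg]

theorem range_comp_le_range_inf_ker (hΔ2 : Δ ∘ₗ Δ = 0) (hanti : δ ∘ₗ Δ + Δ ∘ₗ δ = 0) :
    range (δ ∘ₗ Δ) ≤ range δ ⊓ ker Δ := by
  refine le_inf (range_comp_le_range Δ δ) (range_le_ker_iff.2 ?_)
  rw [← comp_assoc, eq_neg_of_add_eq_zero_right hanti, neg_comp, comp_assoc, hΔ2, comp_zero,
    neg_zero]

end LinearMap

theorem stmt4 {k A : Type*} [Field k] [AddCommGroup A] [Module k A]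
    (δ Δ : A →ₗ[k] A)
    (hδ2 : δ ∘ₗ δ = 0) (hΔ2 : Δ ∘ₗ Δ = 0) (hanti : δ ∘ₗ Δ + Δ ∘ₗ δ = 0) :
    ((LinearMap.range (δ ∘ₗ Δ) = LinearMap.range (Δ ∘ₗ δ) ∧
      LinearMap.range (δ ∘ₗ Δ) = LinearMap.range δ ⊓ LinearMap.ker Δ ∧
      LinearMap.range (δ ∘ₗ Δ) = LinearMap.range Δ ⊓ LinearMap.ker δ)
    ↔ (LinearMap.range (δ ∘ₗ Δ) = LinearMap.range (Δ ∘ₗ δ) ∧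
       LinearMap.range (δ ∘ₗ Δ) =
         (LinearMap.ker δ ⊓ LinearMap.ker Δ) ⊓
           (LinearMap.range δ ⊔ LinearMap.range Δ))) := by
  have hanti' : Δ ∘ₗ δ + δ ∘ₗ Δ = 0 := add_comm (Δ ∘ₗ δ) _ ▸ hanti
  have hP := LinearMap.range_comp_le_range_inf_ker hΔ2 hanti
  have hQ := LinearMap.range_comp_eq_of_anticomm hanti ▸
    LinearMap.range_comp_le_range_inf_ker hδ2 hanti'
  rw [inf_inf_sup_eq_sup_of_le (LinearMap.range_le_ker_iff.2 hδ2)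
    (LinearMap.range_le_ker_iff.2 hΔ2), ← eq_and_eq_iff_eq_sup hP hQ]
end

section
/- Let δ and Δ be anticommuting differentials on a vector space A satisfying Im δΔ = Im δ ∩ Ker Δ and Im δΔ = Im Δ ∩ Ker δ. Then the natural maps give isomorphisms H(A, δ) ≅ H(A, Δ) ≅ (Ker δ ∩ Ker Δ)/Im δΔ. -/
/-!
If `δ x = 0`, anticommutation puts `Δ x` in `Im Δ ∩ Ker δ = Im Δδ`, say `Δ x = Δ (δ v)`; then
`x - δ v` is a representative of the class of `x` killed by both differentials. Injectivity is the
hypothesis `Im δ ∩ Ker Δ = Im δΔ` itself. Since `Δδ = -δΔ`, both statements are symmetric in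
`δ` and `Δ`.
-/

namespace LinearMap

variable {R M : Type*} [Ring R] [AddCommGroup M] [Module R M]

theorem range_comp_eq_range_comp_swap_of_anticomm {d e : M →ₗ[R] M}
    (hde : ∀ x, d (e x) + e (d x) = 0) : range (d ∘ₗ e) = range (e ∘ₗ d) := by
  have : d ∘ₗ e = -(e ∘ₗ d) := ext fun x => eq_neg_of_add_eq_zero_left (hde x)
  rw [this, range_neg]

theorem exists_mem_ker_inf_ker_add_of_range_inf_ker_le {d e : M →ₗ[R] M}
    (hd : ∀ x, d (d x) = 0) (hde : ∀ x, d (e x) + e (d x) = 0)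
    (h : range e ⊓ ker d ≤ range (e ∘ₗ d)) {x : M} (hx : d x = 0) :
    ∃ y u, d y = 0 ∧ e y = 0 ∧ x = y + d u := by
  have hex : e x ∈ range e ⊓ ker d := by
    refine ⟨mem_range_self e x, ?_⟩
    simpa [hx] using hde x
  obtain ⟨v, hv⟩ := h hex
  refine ⟨x - d v, v, by simp [hx, hd], ?_, (sub_add_cancel x _).symm⟩
  rw [map_sub, ← comp_apply, hv, sub_self]

end LinearMap

theorem stmt5 {k A : Type*} [Field k] [AddCommGroup A] [Module k A]
    (δ Δ : A →ₗ[k] A)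
    (hδ2 : ∀ x, δ (δ x) = 0) (hΔ2 : ∀ x, Δ (Δ x) = 0)
    (hanti : ∀ x, δ (Δ x) + Δ (δ x) = 0)
    (hA : LinearMap.range (δ ∘ₗ Δ) = LinearMap.range δ ⊓ LinearMap.ker Δ)
    (hB : LinearMap.range (δ ∘ₗ Δ) = LinearMap.range Δ ⊓ LinearMap.ker δ) :
    -- surjectivity onto H(A, δ): every δ-class has a representative in Ker δ ∩ Ker Δ
    (∀ x : A, δ x = 0 → ∃ y u, δ y = 0 ∧ Δ y = 0 ∧ x = y + δ u) ∧
    -- injectivity into H(A, δ): kernel of the map to H(A, δ) is Im δΔ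
    (∀ y : A, δ y = 0 → Δ y = 0 → (∃ u, y = δ u) → ∃ v, y = δ (Δ v)) ∧
    -- surjectivity onto H(A, Δ)
    (∀ x : A, Δ x = 0 → ∃ y u, δ y = 0 ∧ Δ y = 0 ∧ x = y + Δ u) ∧
    -- injectivity into H(A, Δ)
    (∀ y : A, δ y = 0 → Δ y = 0 → (∃ u, y = Δ u) → ∃ v, y = δ (Δ v)) := by
  have hΔanti : ∀ x, Δ (δ x) + δ (Δ x) = 0 := fun x => by rw [add_comm, hanti]
  have hswap := LinearMap.range_comp_eq_range_comp_swap_of_anticomm hanti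
  refine ⟨fun x hx => ?_, fun y _ hΔy ⟨u, hu⟩ => ?_, fun x hx => ?_, fun y hδy _ ⟨u, hu⟩ => ?_⟩
  · exact LinearMap.exists_mem_ker_inf_ker_add_of_range_inf_ker_le hδ2 hanti (hswap ▸ hB.ge) hx
  · obtain ⟨v, hv⟩ : y ∈ LinearMap.range (δ ∘ₗ Δ) := hA ▸ ⟨⟨u, hu.symm⟩, hΔy⟩
    exact ⟨v, hv.symm⟩
  · obtain ⟨y, u, hΔy, hδy, rfl⟩ :=
      LinearMap.exists_mem_ker_inf_ker_add_of_range_inf_ker_le hΔ2 hΔanti hA.ge hx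
    exact ⟨y, u, hδy, hΔy, rfl⟩
  · obtain ⟨v, hv⟩ : y ∈ LinearMap.range (δ ∘ₗ Δ) := hB ▸ ⟨⟨u, hu.symm⟩, hδy⟩
    exact ⟨v, hv.symm⟩
end

section
/- Let X be a compact Kähler manifold and Δ = [Λ, d] the operator on complex differential forms, where Λ is the adjoint of the Lefschetz operator L. Then the inclusion i: (Ker Δ, d) ↪ (Ω(X), d) induces an isomorphism on cohomology. In particular: (a) every de Rham class has a representative in Ker d ∩ Ker Δ, and (b) if α ∈ Ker Δ is d-exact then α = dβ for some β ∈ Ker Δ. -/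
/-!
Hodge-decompose a closed form as `α = h + □β` with `h` harmonic. Applying `d` shows
`d d* dβ = 0`, hence `d* dβ = 0` and `α = h + d(d*β)`. Since `□ = □_Δ`, the harmonic form
`h` is also killed by `Δ`, which gives (a). If moreover `α` is exact, then `h`, being orthogonal
to `Im d`, vanishes, so `α = d(d*β)`; anticommuting `Δ` past `d` and `d*` turns `Δα = 0` into
`d d*(Δβ) = 0`, hence `d*(Δβ) = 0` and `Δ(d*β) = -d*(Δβ) = 0`, which gives (b).
-/

open scoped InnerProductSpace ComplexInnerProductSpace

section FormalAdjoint

variable {𝕜 E F : Type*} [RCLike 𝕜] [NormedAddCommGroup E] [InnerProductSpace 𝕜 E]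
  [NormedAddCommGroup F] [InnerProductSpace 𝕜 F]

lemma adjoint_eq_zero_of_apply_adjoint_eq_zero {T : F → E} {S : E → F}
    (hTS : ∀ x y, ⟪T x, y⟫_𝕜 = ⟪x, S y⟫_𝕜) {x : E} (h : T (S x) = 0) : S x = 0 :=
  inner_self_eq_zero.mp (by rw [← hTS, h, inner_zero_left])

lemma eq_zero_of_adjoint_eq_zero_of_add_apply_eq_apply {T : F → E} {S : E → F}
    (hTS : ∀ x y, ⟪T x, y⟫_𝕜 = ⟪x, S y⟫_𝕜) {h : E} {x y : F} (hh : S h = 0)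
    (he : h + T x = T y) : h = 0 := by
  refine (inner_self_eq_zero (𝕜 := 𝕜)).mp ?_
  nth_rewrite 1 [eq_sub_of_add_eq he]
  simp only [inner_sub_left, hTS, hh, inner_zero_right, sub_self]

lemma apply_eq_zero_and_adjoint_eq_zero_of_laplacian_eq_zero {T S : E → E}
    (hTS : ∀ x y, ⟪T x, y⟫_𝕜 = ⟪x, S y⟫_𝕜) {x : E} (h : T (S x) + S (T x) = 0) :
    T x = 0 ∧ S x = 0 := by
  have hST : ⟪S (T x), x⟫_𝕜 = ⟪T x, T x⟫_𝕜 := by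
    rw [← inner_conj_symm, ← hTS, inner_conj_symm]
  have hsum : ⟪S x, S x⟫_𝕜 + ⟪T x, T x⟫_𝕜 = 0 := by
    rw [← hTS, ← hST, ← inner_add_left, h, inner_zero_left]
  have hre : RCLike.re ⟪S x, S x⟫_𝕜 + RCLike.re ⟪T x, T x⟫_𝕜 = 0 := by
    rw [← map_add, hsum, map_zero]
  obtain ⟨hS, hT⟩ := (add_eq_zero_iff_of_nonneg inner_self_nonneg inner_self_nonneg).mp hre
  exact ⟨re_inner_self_nonpos.mp hT.le, re_inner_self_nonpos.mp hS.le⟩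

end FormalAdjoint

section HodgeTheory

variable {𝕜 A : Type*} [RCLike 𝕜] [NormedAddCommGroup A] [InnerProductSpace 𝕜 A]
  {d ds Δ : A →ₗ[𝕜] A}

lemma exists_harmonic_add_d_of_d_eq_zero (hd2 : ∀ x, d (d x) = 0)
    (hadj : ∀ x y, ⟪d x, y⟫_𝕜 = ⟪x, ds y⟫_𝕜)
    (hodge : ∀ α : A, ∃ h β, d (ds h) + ds (d h) = 0 ∧ α = h + (d (ds β) + ds (d β)))
    {α : A} (hα : d α = 0) : ∃ h β, d (ds h) + ds (d h) = 0 ∧ α = h + d (ds β) := by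
  obtain ⟨h, β, hh, rfl⟩ := hodge α
  have hdh := (apply_eq_zero_and_adjoint_eq_zero_of_laplacian_eq_zero hadj hh).1
  simp only [map_add, hd2, hdh, zero_add] at hα
  have hds : ds (d β) = 0 := adjoint_eq_zero_of_apply_adjoint_eq_zero hadj hα
  exact ⟨h, β, hh, by rw [hds, add_zero]⟩

lemma apply_ds_eq_zero_of_apply_d_ds_eq_zero
    (hadj : ∀ x y, ⟪d x, y⟫_𝕜 = ⟪x, ds y⟫_𝕜)
    (hΔd : ∀ x, Δ (d x) + d (Δ x) = 0) (hΔds : ∀ x, Δ (ds x) + ds (Δ x) = 0)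
    {β : A} (h : Δ (d (ds β)) = 0) : Δ (ds β) = 0 := by
  have hΔds' : Δ (ds β) = -ds (Δ β) := eq_neg_of_add_eq_zero_left (hΔds β)
  have hd : d (ds (Δ β)) = 0 := by
    simpa only [h, hΔds', map_neg, zero_add, neg_eq_zero] using hΔd (ds β)
  rw [hΔds', adjoint_eq_zero_of_apply_adjoint_eq_zero hadj hd, neg_zero]

end HodgeTheory

theorem stmt12 {A : Type*} [NormedAddCommGroup A] [InnerProductSpace ℂ A]
    (d ds Δ Δs : A →ₗ[ℂ] A)
    (hd2 : ∀ x, d (d x) = 0)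
    (hadj_d : ∀ x y : A, ⟪d x, y⟫ = ⟪x, ds y⟫)
    (hadj_Δ : ∀ x y : A, ⟪Δ x, y⟫ = ⟪x, Δs y⟫)
    -- □ = □_Δ:
    (hlap : ∀ x, d (ds x) + ds (d x) = Δ (Δs x) + Δs (Δ x))
    (hΔd : ∀ x, Δ (d x) + d (Δ x) = 0)
    (hΔds : ∀ x, Δ (ds x) + ds (Δ x) = 0)
    -- Hodge decomposition Ω(X) = H ⊕ Im □:
    (hodge : ∀ α : A, ∃ h β, (d (ds h) + ds (d h) = 0) ∧
      α = h + (d (ds β) + ds (d β))) :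
    -- (a): surjectivity of H(i); every de Rham class has a rep in Ker d ∩ Ker Δ
    (∀ α : A, d α = 0 → ∃ h β, d h = 0 ∧ Δ h = 0 ∧ α = h + d β) ∧
    -- (b): injectivity of H(i); a d-exact element of Ker Δ is d of an element of Ker Δ
    (∀ α : A, Δ α = 0 → (∃ β, α = d β) → ∃ β, Δ β = 0 ∧ α = d β) := by
  have harmonic {h : A} (hh : d (ds h) + ds (d h) = 0) : d h = 0 ∧ ds h = 0 ∧ Δ h = 0 := by
    obtain ⟨hdh, hdsh⟩ := apply_eq_zero_and_adjoint_eq_zero_of_laplacian_eq_zero hadj_d hh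
    exact ⟨hdh, hdsh,
      (apply_eq_zero_and_adjoint_eq_zero_of_laplacian_eq_zero hadj_Δ ((hlap h).symm.trans hh)).1⟩
  refine ⟨fun α hα => ?_, fun α hΔα ⟨γ, hγ⟩ => ?_⟩
  · obtain ⟨h, β, hh, rfl⟩ := exists_harmonic_add_d_of_d_eq_zero hd2 hadj_d hodge hα
    obtain ⟨hdh, -, hΔh⟩ := harmonic hh
    exact ⟨h, ds β, hdh, hΔh, rfl⟩
  · have hα : d α = 0 := by rw [hγ, hd2]
    obtain ⟨h, β, hh, hαβ⟩ := exists_harmonic_add_d_of_d_eq_zero hd2 hadj_d hodge hα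
    have h0 : h = 0 := eq_zero_of_adjoint_eq_zero_of_add_apply_eq_apply hadj_d
      (harmonic hh).2.1 (hαβ.symm.trans hγ)
    rw [hαβ, h0, zero_add] at hΔα ⊢
    exact ⟨ds β, apply_ds_eq_zero_of_apply_d_ds_eq_zero hadj_d hΔd hΔds hΔα, rfl⟩
end
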